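/- For every β ∈ ℝ and every r ∈ (0,1), the radial derivatives of f_β satisfy (d/dr) f_β(r) = (cos(β/2)(1 + r^{n−2}) + i·sin(β/2)(1 − r^{n−2})) / √(1 − r^{2n}) and (d/dr) f_β(r e^{iπ/n}) = e^{iπ/n} · (cos(β/2)(1 − r^{n−2}) + i·sin(β/2)(1 + r^{n−2})) / √(1 − r^{2n}). Moreover, for β ∈ (0, π/2], the functions r ↦ |f_β(r)| and r ↦ |f_β(r e^{iπ/n})| are strictly increasing on (0,1]. -/

import Mathlib

open Real

noncomputable def A (m : ℕ) : ℝ := (Nat.centralBinom m : ℝ) / 4 ^ m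

noncomputable def c (n m : ℕ) : ℝ := A m / (2 * m * n + 1)

noncomputable def d (n m : ℕ) : ℝ := A m * ((n : ℝ) - 1) / ((n : ℝ) * (2 * m + 1) - 1)

noncomputable def H (n : ℕ) (z : ℂ) : ℂ := ∑' m : ℕ, (c n m : ℂ) * z ^ m

noncomputable def G (n : ℕ) (z : ℂ) : ℂ := ∑' m : ℕ, (d n m : ℂ) * z ^ m

noncomputable def hh (n : ℕ) (z : ℂ) : ℂ := ∑' m : ℕ, (c n m : ℂ) * z ^ (2 * m * n + 1)

noncomputable def gg (n : ℕ) (z : ℂ) : ℂ :=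
  (1 / ((n : ℂ) - 1)) * ∑' m : ℕ, (d n m : ℂ) * z ^ (2 * m * n + n - 1)

noncomputable def f (n : ℕ) (β : ℝ) (z : ℂ) : ℂ :=
  Complex.exp (Complex.I * β / 2) * hh n z +
    Complex.exp (-(Complex.I * β / 2)) * (starRingEnd ℂ) (gg n z)

noncomputable def K (n : ℕ) : ℝ :=
  Real.sqrt π * Real.Gamma (1 + 1 / (2 * n)) / Real.Gamma (1 / 2 + 1 / (2 * n))

/-! With `w ^ (2 * n) = 1`, every term of `h_n` and `g_n` is rotated by the same power of `w`,
so `h_n (r w) = w h(r)` and `g_n (r w) = w ^ (n - 1) g(r)` for real series `h`, `g` which, by the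
binomial series `∑ A m x ^ m = (1 - x) ^ (-1/2)`, are the primitives of `(1 - r ^ (2n)) ^ (-1/2)`
and `r ^ (n - 2) (1 - r ^ (2n)) ^ (-1/2)` vanishing at `0`. For `w = 1` and `w = e^{iπ/n}` one has
`conj (w ^ (n - 1)) = ± w`, hence `f_β (r w) = w (cos (β/2) (h ± g) + i sin (β/2) (h ∓ g))`, and
both claims follow: `h + g` is strictly increasing and `h - g` is nonnegative and increasing on
`[0, 1]`, termwise, because `x ^ k / k - x ^ l / l` increases on `[0, 1]` for `k ≤ l`. -/

open Polynomial

theorem A_nonneg (m : ℕ) : 0 ≤ A m := by unfold A; positivity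

@[simp]
theorem A_zero : A 0 = 1 := by simp [A]

theorem A_succ (m : ℕ) : A (m + 1) = A m * ((2 * m + 1) / (2 * m + 2)) := by
  have h : ((m : ℝ) + 1) * (Nat.centralBinom (m + 1) : ℝ)
      = 2 * (2 * m + 1) * (Nat.centralBinom m : ℝ) := by
    exact_mod_cast Nat.succ_mul_centralBinom_succ m
  unfold A
  rw [pow_succ]
  field_simp
  linear_combination 2 * h

theorem A_sub_A_succ (m : ℕ) : A m - A (m + 1) = A m / (2 * (m + 1)) := by
  rw [A_succ]
  field_simp
  ring

theorem A_antitone : Antitone A :=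
  antitone_nat_of_succ_le fun m => by
    have := A_sub_A_succ m
    have : 0 ≤ A m / (2 * (m + 1)) := div_nonneg (A_nonneg m) (by positivity)
    linarith

theorem A_le_one (m : ℕ) : A m ≤ 1 := by
  simpa using A_antitone (Nat.zero_le m)

theorem summable_A_div_succ : Summable fun m : ℕ => A m / (m + 1) := by
  have htel : Summable fun m => A m - A (m + 1) :=
    summable_of_sum_range_le (c := A 0) (fun m => sub_nonneg.2 (A_antitone m.le_succ))
      fun N => by rw [Finset.sum_range_sub']; linarith [A_nonneg N]
  refine (htel.mul_left 2).congr fun m => ?_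
  rw [A_sub_A_succ]
  field_simp

theorem descPochhammer_smeval_succ {R : Type*} [Ring R] (r : R) (n : ℕ) :
    (descPochhammer ℤ (n + 1)).smeval r = r * (descPochhammer ℤ n).smeval (r - 1) := by
  rw [descPochhammer_succ_left, smeval_X_mul, smeval_comp]
  simp [smeval_sub, smeval_X, smeval_one]

theorem descPochhammer_smeval_sub_half (n : ℕ) :
    (descPochhammer ℤ n).smeval ((n : ℝ) - 1 / 2) = n.factorial * A n := by
  induction n with
  | zero => simp
  | succ n ih =>
    rw [descPochhammer_smeval_succ,
      show ((n + 1 : ℕ) : ℝ) - 1 / 2 - 1 = n - 1 / 2 by push_cast; ring, ih, A_succ,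
      Nat.factorial_succ]
    push_cast
    field_simp
    ring

theorem ringChoose_sub_half (n : ℕ) : Ring.choose ((1 / 2 : ℝ) + n - 1) n = A n := by
  have h := Ring.descPochhammer_eq_factorial_smul_choose ((1 / 2 : ℝ) + n - 1) n
  rw [show (1 / 2 : ℝ) + n - 1 = n - 1 / 2 by ring, descPochhammer_smeval_sub_half,
    nsmul_eq_mul] at h
  rw [show (1 / 2 : ℝ) + n - 1 = n - 1 / 2 by ring]
  exact (mul_left_cancel₀ (by positivity) h).symm

theorem hasSum_A_mul_pow {x : ℝ} (hx : |x| < 1) :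
    HasSum (fun m => A m * x ^ m) (1 / √(1 - x)) := by
  have h := (Real.one_div_one_sub_rpow_hasFPowerSeriesOnBall_zero (1 / 2)).hasSum
    (y := x) (by simpa [enorm_eq_nnnorm, ← NNReal.coe_lt_one] using hx)
  simp only [FormalMultilinearSeries.ofScalars_apply_eq, ringChoose_sub_half, smul_eq_mul,
    zero_add] at h
  rwa [Real.sqrt_eq_rpow]

theorem hasDerivAt_pow_succ_div (k : ℕ) (y : ℝ) :
    HasDerivAt (fun y : ℝ => y ^ (k + 1) / (k + 1 : ℕ)) (y ^ k) y := by
  refine ((hasDerivAt_pow (k + 1) y).div_const ((k + 1 : ℕ) : ℝ)).congr_deriv ?_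
  rw [Nat.add_sub_cancel]
  field_simp

theorem hasDerivAt_tsum_mul_pow_div {a : ℕ → ℝ} {C : ℝ} (ha : ∀ m, |a m| ≤ C) {p : ℕ}
    (hp : 1 ≤ p) (t : ℕ) {r : ℝ} (hr : |r| < 1) :
    HasDerivAt (fun y => ∑' m, a m * (y ^ (p * m + t + 1) / (p * m + t + 1 : ℕ)))
      (r ^ t * ∑' m, a m * (r ^ p) ^ m) r := by
  obtain ⟨b, hrb, hb1⟩ := exists_between hr
  have hb0 : 0 ≤ b := (abs_nonneg r).trans hrb.le
  have hterm : ∀ m (y : ℝ), HasDerivAt (fun y => a m * (y ^ (p * m + t + 1) / (p * m + t + 1 : ℕ)))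
      (a m * ((y ^ p) ^ m * y ^ t)) y := fun m y => by
    rw [← pow_mul, ← pow_add]
    exact (hasDerivAt_pow_succ_div (p * m + t) y).const_mul (a m)
  have hbound : ∀ m, ∀ y ∈ Set.Ioo (-b) b, ‖a m * ((y ^ p) ^ m * y ^ t)‖ ≤ C * (b ^ p) ^ m :=
    fun m y hy => by
      have hyb : |y| ≤ b := abs_le.2 ⟨hy.1.le, hy.2.le⟩
      rw [Real.norm_eq_abs, abs_mul, abs_mul, abs_pow, abs_pow, abs_pow]
      calc |a m| * ((|y| ^ p) ^ m * |y| ^ t) ≤ C * ((b ^ p) ^ m * 1) := by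
            gcongr
            · exact (abs_nonneg _).trans (ha m)
            · exact ha m
            · exact pow_le_one₀ (abs_nonneg y) (hyb.trans hb1.le)
        _ = C * (b ^ p) ^ m := by ring
  have hgeom : Summable fun m => C * (b ^ p) ^ m :=
    (summable_geometric_of_lt_one (by positivity) (pow_lt_one₀ hb0 hb1 (by omega))).mul_left C
  refine (hasDerivAt_tsum_of_isPreconnected hgeom isOpen_Ioo (convex_Ioo (-b) b).isPreconnected
    (fun m y _ => hterm m y) hbound (y₀ := 0) (by simp; linarith [abs_nonneg r]) (by simp)
    (abs_lt.1 hrb)).congr_deriv ?_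
  rw [← tsum_mul_left]
  exact tsum_congr fun m => by ring

theorem monotoneOn_pow_succ_div_sub {a b : ℕ} (hab : a ≤ b) :
    MonotoneOn (fun x : ℝ => x ^ (a + 1) / (a + 1 : ℕ) - x ^ (b + 1) / (b + 1 : ℕ))
      (Set.Icc 0 1) := by
  have hderiv : ∀ x : ℝ, HasDerivAt
      (fun x : ℝ => x ^ (a + 1) / (a + 1 : ℕ) - x ^ (b + 1) / (b + 1 : ℕ)) (x ^ a - x ^ b) x :=
    fun x => (hasDerivAt_pow_succ_div a x).sub (hasDerivAt_pow_succ_div b x)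
  refine monotoneOn_of_deriv_nonneg (convex_Icc 0 1)
    (fun x _ => (hderiv x).continuousAt.continuousWithinAt)
    (fun x _ => (hderiv x).differentiableAt.differentiableWithinAt) fun x hx => ?_
  rw [interior_Icc] at hx
  rw [(hderiv x).deriv, sub_nonneg]
  exact pow_le_pow_of_le_one hx.1.le hx.2.le hab

-- `h_n = primA (2 * n) 0` and `g_n = primA (2 * n) (n - 2)` on the real axis.
noncomputable def primA (p t : ℕ) (r : ℝ) : ℝ :=
  ∑' m, A m * (r ^ (p * m + t + 1) / (p * m + t + 1 : ℕ))

theorem summable_primA {p : ℕ} (hp : 1 ≤ p) (t : ℕ) {r : ℝ} (hr : |r| ≤ 1) :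
    Summable fun m => A m * (r ^ (p * m + t + 1) / (p * m + t + 1 : ℕ)) := by
  refine summable_A_div_succ.of_norm_bounded fun m => ?_
  rw [Real.norm_eq_abs, abs_mul, abs_div, abs_pow, abs_of_nonneg (A_nonneg m), Nat.abs_cast,
    ← mul_one_div (A m)]
  have hm : (m : ℝ) + 1 ≤ (p * m + t + 1 : ℕ) := by
    push_cast
    nlinarith [(Nat.one_le_cast (α := ℝ)).2 hp, (Nat.cast_nonneg (α := ℝ) m),
      (Nat.cast_nonneg (α := ℝ) t)]
  gcongr
  · exact A_nonneg m
  · exact pow_le_one₀ (abs_nonneg r) hr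

theorem hasDerivAt_primA {p : ℕ} (hp : 1 ≤ p) (t : ℕ) {r : ℝ} (hr : |r| < 1) :
    HasDerivAt (primA p t) (r ^ t / √(1 - r ^ p)) r := by
  have hA : ∀ m, |A m| ≤ 1 := fun m => by rw [abs_of_nonneg (A_nonneg m)]; exact A_le_one m
  have hrp : |r ^ p| < 1 := by rw [abs_pow]; exact pow_lt_one₀ (abs_nonneg r) hr (by omega)
  refine (hasDerivAt_tsum_mul_pow_div hA hp t hr).congr_deriv ?_
  rw [(hasSum_A_mul_pow hrp).tsum_eq, mul_one_div]

theorem primA_zero (p t : ℕ) : primA p t 0 = 0 := by simp [primA]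

theorem abs_le_one_of_mem_Icc {r : ℝ} (hr : r ∈ Set.Icc (0 : ℝ) 1) : |r| ≤ 1 :=
  abs_le.2 ⟨by linarith [hr.1], hr.2⟩

theorem strictMonoOn_primA {p : ℕ} (hp : 1 ≤ p) (t : ℕ) :
    StrictMonoOn (primA p t) (Set.Icc 0 1) := by
  intro r₁ h₁ r₂ h₂ h12
  have := h₁.1
  refine Summable.tsum_lt_tsum (i := 0) (fun m => ?_) ?_
    (summable_primA hp t (abs_le_one_of_mem_Icc h₁))
    (summable_primA hp t (abs_le_one_of_mem_Icc h₂))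
  · have := A_nonneg m
    gcongr
  · simp only [mul_zero, zero_add, A_zero, one_mul]
    gcongr

theorem monotoneOn_primA_sub {p : ℕ} (hp : 1 ≤ p) {t t' : ℕ} (htt' : t ≤ t') :
    MonotoneOn (fun r => primA p t r - primA p t' r) (Set.Icc 0 1) := by
  intro r₁ h₁ r₂ h₂ h12
  have s₁ := summable_primA hp t (abs_le_one_of_mem_Icc h₁)
  have s₁' := summable_primA hp t' (abs_le_one_of_mem_Icc h₁)
  have s₂ := summable_primA hp t (abs_le_one_of_mem_Icc h₂)
  have s₂' := summable_primA hp t' (abs_le_one_of_mem_Icc h₂)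
  simp only [primA]
  rw [← s₁.tsum_sub s₁', ← s₂.tsum_sub s₂']
  refine Summable.tsum_le_tsum (fun m => ?_) (s₁.sub s₁') (s₂.sub s₂')
  simp only [← mul_sub]
  exact mul_le_mul_of_nonneg_left
    (monotoneOn_pow_succ_div_sub (Nat.add_le_add_left htt' (p * m)) h₁ h₂ h12) (A_nonneg m)

theorem primA_nonneg {p : ℕ} (hp : 1 ≤ p) (t : ℕ) {r : ℝ} (hr : r ∈ Set.Icc (0 : ℝ) 1) :
    0 ≤ primA p t r := by
  simpa [primA_zero] using
    (strictMonoOn_primA hp t).monotoneOn (Set.left_mem_Icc.2 zero_le_one) hr hr.1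

theorem primA_sub_nonneg {p : ℕ} (hp : 1 ≤ p) {t t' : ℕ} (htt' : t ≤ t') {r : ℝ}
    (hr : r ∈ Set.Icc (0 : ℝ) 1) : 0 ≤ primA p t r - primA p t' r := by
  simpa [primA_zero] using
    monotoneOn_primA_sub hp htt' (Set.left_mem_Icc.2 zero_le_one) hr hr.1

open ComplexConjugate

theorem hh_ofReal_mul (n : ℕ) {w : ℂ} (hw : w ^ (2 * n) = 1) (r : ℝ) :
    hh n (r * w) = w * primA (2 * n) 0 r := by
  rw [hh, primA, Complex.ofReal_tsum, ← tsum_mul_left]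
  refine tsum_congr fun m => ?_
  rw [show 2 * m * n + 1 = 2 * n * m + 0 + 1 by ring, mul_pow, pow_succ w, pow_mul, hw, one_pow,
    c]
  push_cast
  ring

theorem gg_ofReal_mul {n : ℕ} (hn : 2 ≤ n) {w : ℂ} (hw : w ^ (2 * n) = 1) (r : ℝ) :
    gg n (r * w) = w ^ (n - 1) * primA (2 * n) (n - 2) r := by
  obtain ⟨k, rfl⟩ : ∃ k, n = k + 2 := ⟨n - 2, by omega⟩
  rw [gg, primA, Complex.ofReal_tsum, ← tsum_mul_left, ← tsum_mul_left]
  refine tsum_congr fun m => ?_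
  rw [show 2 * m * (k + 2) + (k + 2) - 1 = 2 * (k + 2) * m + (k + 1) by
      rw [show 2 * m * (k + 2) + (k + 2) = 2 * (k + 2) * m + (k + 1) + 1 by ring,
        Nat.add_sub_cancel],
    show k + 2 - 2 = k by omega, show k + 2 - 1 = k + 1 by omega, mul_pow, pow_add w, pow_mul, hw,
    one_pow, one_mul, d]
  have h₁ : (k : ℂ) + 2 - 1 ≠ 0 := by
    rw [show (k : ℂ) + 2 - 1 = k + 1 by ring]; exact Nat.cast_add_one_ne_zero (R := ℂ) k
  have h₂ : ((k : ℂ) + 2) * (2 * m + 1) - 1 ≠ 0 := by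
    rw [show ((k : ℂ) + 2) * (2 * m + 1) - 1 = (2 * k * m + k + 4 * m + 1 : ℕ) by push_cast; ring]
    exact Nat.cast_ne_zero.2 (Nat.succ_ne_zero _)
  have h₃ : 2 * ((k : ℂ) + 2) * m + k + 1 ≠ 0 := by
    rw [show 2 * ((k : ℂ) + 2) * m + k + 1 = (2 * k * m + k + 4 * m + 1 : ℕ) by push_cast; ring]
    exact Nat.cast_ne_zero.2 (Nat.succ_ne_zero _)
  push_cast
  field_simp
  ring

theorem exp_mul_add_exp_neg_mul (θ a b : ℝ) :
    Complex.exp (Complex.I * θ / 2) * a + Complex.exp (-(Complex.I * θ / 2)) * b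
      = ((cos (θ / 2) * (a + b) : ℝ) : ℂ) + ((sin (θ / 2) * (a - b) : ℝ) : ℂ) * Complex.I := by
  have e : Complex.I * θ / 2 = ((θ / 2 : ℝ) : ℂ) * Complex.I := by push_cast; ring
  rw [e, ← neg_mul, ← Complex.ofReal_neg, Complex.exp_mul_I, Complex.exp_mul_I]
  push_cast
  rw [Complex.cos_neg, Complex.sin_neg]
  ring

theorem f_ofReal_mul {n : ℕ} (hn : 2 ≤ n) {w : ℂ} (hw : w ^ (2 * n) = 1) {s : ℝ}
    (hs : conj (w ^ (n - 1)) = s * w) (β r : ℝ) :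
    f n β (r * w) = w * (((cos (β / 2) * (primA (2 * n) 0 r + s * primA (2 * n) (n - 2) r) : ℝ) : ℂ)
      + ((sin (β / 2) * (primA (2 * n) 0 r - s * primA (2 * n) (n - 2) r) : ℝ) : ℂ)
        * Complex.I) := by
  rw [f, hh_ofReal_mul n hw, gg_ofReal_mul hn hw, map_mul, hs, Complex.conj_ofReal,
    ← exp_mul_add_exp_neg_mul]
  push_cast
  ring

theorem hasDerivAt_f_ofReal_mul {n : ℕ} (hn : 2 ≤ n) {w : ℂ} (hw : w ^ (2 * n) = 1) {s : ℝ}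
    (hs : conj (w ^ (n - 1)) = s * w) (β : ℝ) {r : ℝ} (hr : |r| < 1) :
    HasDerivAt (fun r : ℝ => f n β (r * w))
      (w * ((((cos (β / 2) * (1 + s * r ^ (n - 2)) : ℝ) : ℂ) +
          Complex.I * ((sin (β / 2) * (1 - s * r ^ (n - 2)) : ℝ) : ℂ)) /
        ((√(1 - r ^ (2 * n)) : ℝ) : ℂ))) r := by
  have hp : 1 ≤ 2 * n := by omega
  have hh := hasDerivAt_primA hp 0 hr
  have hg := (hasDerivAt_primA hp (n - 2) hr).const_mul s
  have hre := ((hh.add hg).const_mul (cos (β / 2))).ofReal_comp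
  have him := ((hh.sub hg).const_mul (sin (β / 2))).ofReal_comp
  rw [show (fun r : ℝ => f n β (r * w)) = _ from funext (f_ofReal_mul hn hw hs β)]
  refine ((hre.add (him.mul_const Complex.I)).const_mul w).congr_deriv ?_
  push_cast
  ring

theorem norm_f_ofReal_mul {n : ℕ} (hn : 2 ≤ n) {w : ℂ} (hw : w ^ (2 * n) = 1) {s : ℝ}
    (hs : conj (w ^ (n - 1)) = s * w) (β r : ℝ) :
    ‖f n β (r * w)‖ = √((cos (β / 2) * (primA (2 * n) 0 r + s * primA (2 * n) (n - 2) r)) ^ 2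
      + (sin (β / 2) * (primA (2 * n) 0 r - s * primA (2 * n) (n - 2) r)) ^ 2) := by
  have hw1 : ‖w‖ = 1 :=
    (pow_eq_one_iff_of_nonneg (norm_nonneg w) (n := 2 * n) (by omega)).1
      (by rw [← norm_pow, hw, norm_one])
  rw [f_ofReal_mul hn hw hs, norm_mul, hw1, one_mul, Complex.norm_add_mul_I]

theorem strictMonoOn_sqrt_sq_add_sq {S : Set ℝ} {u v : ℝ → ℝ} {a : ℝ} (b : ℝ) (ha : a ≠ 0)
    (hu : StrictMonoOn u S) (hv : MonotoneOn v S) (hu0 : ∀ x ∈ S, 0 ≤ u x)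
    (hv0 : ∀ x ∈ S, 0 ≤ v x) :
    StrictMonoOn (fun x => √((a * u x) ^ 2 + (b * v x) ^ 2)) S := by
  intro x hx y hy hxy
  refine Real.sqrt_lt_sqrt (by positivity) (add_lt_add_of_lt_of_le ?_ ?_)
  · rw [mul_pow, mul_pow]
    have := pow_lt_pow_left₀ (hu hx hy hxy) (hu0 x hx) two_ne_zero
    gcongr
  · rw [mul_pow, mul_pow]
    have := pow_le_pow_left₀ (hv0 x hx) (hv hx hy hxy.le) 2
    gcongr

theorem exp_I_pi_div_pow {n : ℕ} (hn : n ≠ 0) :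
    Complex.exp (Complex.I * ((π / n : ℝ) : ℂ)) ^ n = -1 := by
  rw [← Complex.exp_nat_mul, ← Complex.exp_pi_mul_I]
  congr 1
  push_cast
  field_simp

theorem exp_I_pi_div_pow_two_mul {n : ℕ} (hn : n ≠ 0) :
    Complex.exp (Complex.I * ((π / n : ℝ) : ℂ)) ^ (2 * n) = 1 := by
  rw [pow_mul', exp_I_pi_div_pow hn]
  norm_num

theorem conj_exp_I_pi_div_pow_pred {n : ℕ} (hn : n ≠ 0) :
    conj (Complex.exp (Complex.I * ((π / n : ℝ) : ℂ)) ^ (n - 1))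
      = ((-1 : ℝ) : ℂ) * Complex.exp (Complex.I * ((π / n : ℝ) : ℂ)) := by
  set w := Complex.exp (Complex.I * ((π / n : ℝ) : ℂ))
  have hconj : conj w = w⁻¹ := by
    rw [← Complex.exp_conj, map_mul, Complex.conj_I, Complex.conj_ofReal, neg_mul,
      Complex.exp_neg]
  rw [map_pow, hconj, inv_pow]
  refine inv_eq_of_mul_eq_one_right ?_
  rw [show ((-1 : ℝ) : ℂ) * w = -w by push_cast; ring, mul_neg, ← pow_succ,
    Nat.sub_add_cancel (Nat.one_le_iff_ne_zero.2 hn), exp_I_pi_div_pow hn, neg_neg]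

theorem stmt_11 (n : ℕ) (hn : 3 ≤ n) (β : ℝ) :
    (∀ r ∈ Set.Ioo (0 : ℝ) 1,
      HasDerivAt (fun r : ℝ => f n β (r : ℂ))
        ((((Real.cos (β / 2) * (1 + r ^ (n - 2)) : ℝ) : ℂ) +
            Complex.I * ((Real.sin (β / 2) * (1 - r ^ (n - 2)) : ℝ) : ℂ)) /
          ((Real.sqrt (1 - r ^ (2 * n)) : ℝ) : ℂ)) r ∧
      HasDerivAt (fun r : ℝ => f n β ((r : ℂ) * Complex.exp (Complex.I * ((π / n : ℝ) : ℂ))))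
        (Complex.exp (Complex.I * ((π / n : ℝ) : ℂ)) *
          ((((Real.cos (β / 2) * (1 - r ^ (n - 2)) : ℝ) : ℂ) +
              Complex.I * ((Real.sin (β / 2) * (1 + r ^ (n - 2)) : ℝ) : ℂ)) /
            ((Real.sqrt (1 - r ^ (2 * n)) : ℝ) : ℂ))) r) ∧
    (β ∈ Set.Ioc (0 : ℝ) (π / 2) →
      StrictMonoOn (fun r : ℝ => ‖f n β (r : ℂ)‖) (Set.Ioc 0 1) ∧
      StrictMonoOn
        (fun r : ℝ => ‖f n β ((r : ℂ) * Complex.exp (Complex.I * ((π / n : ℝ) : ℂ)))‖)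
        (Set.Ioc 0 1)) := by
  have hn2 : 2 ≤ n := by omega
  have hp : 1 ≤ 2 * n := by omega
  have hw := exp_I_pi_div_pow_two_mul (n := n) (by omega)
  have hws := conj_exp_I_pi_div_pow_pred (n := n) (by omega)
  have h1s : conj ((1 : ℂ) ^ (n - 1)) = ((1 : ℝ) : ℂ) * 1 := by simp
  refine ⟨fun r hr => ?_, fun hβ => ?_⟩
  · have hr' : |r| < 1 := abs_lt.2 ⟨by linarith [hr.1], hr.2⟩
    constructor
    · simpa using hasDerivAt_f_ofReal_mul hn2 (one_pow _) h1s β hr'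
    · simpa [sub_eq_add_neg] using hasDerivAt_f_ofReal_mul hn2 hw hws β hr'
  have hcos : cos (β / 2) ≠ 0 := by
    have := hβ.1; have := hβ.2; have := pi_pos
    exact (cos_pos_of_mem_Ioo ⟨by linarith, by linarith⟩).ne'
  have hsin : sin (β / 2) ≠ 0 := by
    have := hβ.1; have := hβ.2; have := pi_pos
    exact (sin_pos_of_pos_of_lt_pi (by linarith) (by linarith)).ne'
  have hsum := (strictMonoOn_primA hp 0).add_monotone (strictMonoOn_primA hp (n - 2)).monotoneOn
  have hsum0 : ∀ r ∈ Set.Icc (0 : ℝ) 1, 0 ≤ primA (2 * n) 0 r + primA (2 * n) (n - 2) r :=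
    fun r hr => add_nonneg (primA_nonneg hp 0 hr) (primA_nonneg hp _ hr)
  have hdiff := monotoneOn_primA_sub hp (Nat.zero_le (n - 2))
  have hdiff0 := fun r (hr : r ∈ Set.Icc (0 : ℝ) 1) => primA_sub_nonneg hp (Nat.zero_le (n - 2)) hr
  constructor
  · refine ((strictMonoOn_sqrt_sq_add_sq (sin (β / 2)) hcos hsum hdiff hsum0 hdiff0).congr
      fun r _ => ?_).mono Set.Ioc_subset_Icc_self
    simpa using (norm_f_ofReal_mul hn2 (one_pow _) h1s β r).symm
  · refine ((strictMonoOn_sqrt_sq_add_sq (cos (β / 2)) hsin hsum hdiff hsum0 hdiff0).congr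
      fun r _ => ?_).mono Set.Ioc_subset_Icc_self
    rw [norm_f_ofReal_mul hn2 hw hws, add_comm]
    ring_nf
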